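/- arXiv:1708.07967 — 4 statements merged into one kernel-verified Lean document; each statement's English description precedes it below -/
import Mathlib

section
/- The uniform distribution π̂ = 𝟙/vol(G) on directed edges is a stationary distribution of the begrudgingly-backtracking random walk: π̂ P̂ = π̂. -/
/-
The uniform distribution is stationary because every column of `P̂` sums to 1: the directed edges
entering `(x, y)` are the `(u, x)` with `u ~ x`. If `d_x = 1`, the only one is `(y, x)`, which
bounces back with probability `1`; otherwise the `d_x - 1` edges with `u ≠ y` each move to
`(x, y)` with probability `1 / (d_x - 1)`, and `(y, x)` never does.
-/

open Finset

/-- The directed edges of a simple graph (both orientations of each edge). -/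
def DirEdge {V : Type*} (G : SimpleGraph V) := {p : V × V // G.Adj p.1 p.2}

instance {V : Type*} [Fintype V] [DecidableEq V] (G : SimpleGraph V)
    [DecidableRel G.Adj] : Fintype (DirEdge G) := Subtype.fintype _

/-- The begrudgingly-backtracking random-walk transition matrix on directed edges. -/
noncomputable def bbtTransition {V : Type*} [Fintype V] [DecidableEq V] (G : SimpleGraph V)
    [DecidableRel G.Adj] (e f : DirEdge G) : ℝ :=
  if e.1.2 = f.1.1 ∧ f.1.2 ≠ e.1.1 then 1 / ((G.degree e.1.2 : ℝ) - 1)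
  else if e.1.2 = f.1.1 ∧ f.1.2 = e.1.1 ∧ G.degree e.1.2 = 1 then 1
  else 0

section

variable {V : Type*} [Fintype V] [DecidableEq V] (G : SimpleGraph V) [DecidableRel G.Adj]

theorem DirEdge.sum_eq_sum_neighborFinset_of_snd {M : Type*} [AddCommMonoid M] (g : V × V → M)
    (x : V) (hg : ∀ p : V × V, p.2 ≠ x → g p = 0) :
    ∑ e : DirEdge G, g e.1 = ∑ u ∈ G.neighborFinset x, g (u, x) := by
  have hsub : ∑ e : DirEdge G, g e.1 = ∑ p : V × V, if G.Adj p.1 p.2 then g p else 0 := by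
    rw [← Finset.sum_filter]
    exact (Finset.sum_subtype _ (fun p => by simp) g).symm
  rw [hsub, Fintype.sum_prod_type_right, Finset.sum_eq_single x
      (fun v _ hv => Finset.sum_eq_zero fun u _ => by simp [hg (u, v) hv])
      (by simp), ← Finset.sum_filter]
  congr 1
  ext u
  simp [SimpleGraph.adj_comm]

theorem sum_bbtTransition_eq_one (f : DirEdge G) : ∑ e : DirEdge G, bbtTransition G e f = 1 := by
  obtain ⟨⟨x, y⟩, hxy⟩ := f
  have hy : y ∈ G.neighborFinset x := (G.mem_neighborFinset x y).2 hxy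
  have hcard : (((G.neighborFinset x).erase y).card : ℝ) = (G.degree x : ℝ) - 1 := by
    rw [Finset.card_erase_of_mem hy, G.card_neighborFinset_eq_degree,
      Nat.cast_pred ((G.degree_pos_iff_exists_adj x).2 ⟨y, hxy⟩)]
  let t : V × V → ℝ := fun p =>
    if p.2 = x ∧ y ≠ p.1 then 1 / ((G.degree p.2 : ℝ) - 1)
    else if p.2 = x ∧ y = p.1 ∧ G.degree p.2 = 1 then 1 else 0
  calc ∑ e : DirEdge G, bbtTransition G e ⟨(x, y), hxy⟩ = ∑ e : DirEdge G, t e.1 := rfl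
    _ = ∑ u ∈ G.neighborFinset x, t (u, x) :=
      DirEdge.sum_eq_sum_neighborFinset_of_snd G t x fun p hp => by simp [t, hp]
    _ = t (y, x) + ∑ u ∈ (G.neighborFinset x).erase y, t (u, x) :=
      (Finset.add_sum_erase _ _ hy).symm
    _ = (if G.degree x = 1 then 1 else 0)
          + ((G.degree x : ℝ) - 1) / ((G.degree x : ℝ) - 1) := by
      rw [Finset.sum_congr (g := fun _ => 1 / ((G.degree x : ℝ) - 1)) rfl
          fun u hu => if_pos ⟨rfl, (Finset.ne_of_mem_erase hu).symm⟩,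
        Finset.sum_const, nsmul_eq_mul, hcard, mul_one_div]
      simp [t]
    -- for `d_x = 1` the second summand is Lean's `0 / 0 = 0`
    _ = 1 := by
      by_cases hd : G.degree x = 1
      · simp [hd]
      · have : (G.degree x : ℝ) - 1 ≠ 0 := sub_ne_zero.2 (Nat.cast_ne_one.2 hd)
        simp [hd, this]

end

theorem bbt_uniform_stationary_general {V : Type*} [Fintype V] [DecidableEq V]
    (G : SimpleGraph V) [DecidableRel G.Adj] :
    ∀ f : DirEdge G,
      ∑ e : DirEdge G, (1 / (2 * (G.edgeFinset.card : ℝ))) * bbtTransition G e f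
        = 1 / (2 * (G.edgeFinset.card : ℝ)) := by
  intro f
  rw [← Finset.mul_sum, sum_bbtTransition_eq_one, mul_one]

/-- The uniform distribution `1/(2m) = 1/vol(G)` on directed edges is stationary
for the begrudgingly-backtracking random walk. -/
theorem bbt_uniform_stationary {V : Type*} [Fintype V] [DecidableEq V]
    (G : SimpleGraph V) [DecidableRel G.Adj]
    (hconn : G.Connected) (hdeg : ∀ v : V, 1 ≤ G.degree v) :
    ∀ f : DirEdge G,
      ∑ e : DirEdge G, (1 / (2 * (G.edgeFinset.card : ℝ))) * bbtTransition G e f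
        = 1 / (2 * (G.edgeFinset.card : ℝ)) :=
  bbt_uniform_stationary_general G
end

section
/- For a d-regular graph with d ≥ 2 and any real λ with 2√(d−1) ≤ λ ≤ d, the ratio ρ̃/ρ satisfies d/(2(d−1)) ≤ ρ̃/ρ ≤ 1, where ρ = λ/d and ρ̃ = (λ + √(λ² − 4(d−1)))/(2(d−1)). -/
/-!
The non-backtracking rate `ρ̃` is the larger root of `(d - 1) x² - λ x + 1`. Dropping the square
root gives `ρ̃ ≥ λ / (2(d - 1))`, i.e. the lower bound. For the upper bound, `x = λ / d` lies to the
right of the vertex `λ / (2(d - 1))` (as `d ≥ 2`) and the quadratic there equals `(d² - λ²) / d² ≥ 0`,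
so `λ / d` dominates the larger root.
-/

/-- Completing the square: `4a(ax² - bx + c) = (2ax - b)² - (b² - 4ac)`. No sign condition on the
discriminant is needed, since `√` of a negative number is `0`. -/
theorem quadratic_larger_root_le {a b c x : ℝ} (ha : 0 < a) (hvertex : b ≤ 2 * a * x)
    (hx : 0 ≤ a * x ^ 2 - b * x + c) :
    (b + √(b ^ 2 - 4 * a * c)) / (2 * a) ≤ x := by
  have hsq : b ^ 2 - 4 * a * c ≤ (2 * a * x - b) ^ 2 := by nlinarith
  have hsqrt : √(b ^ 2 - 4 * a * c) ≤ 2 * a * x - b :=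
    (Real.sqrt_le_sqrt hsq).trans_eq (Real.sqrt_sq (by linarith))
  rw [div_le_iff₀ (by positivity)]
  linarith

theorem nonbacktracking_rate_le_simple_rate {d lam : ℝ} (hd : 2 ≤ d) (hlam : 0 ≤ lam)
    (hhigh : lam ≤ d) :
    (lam + √(lam ^ 2 - 4 * (d - 1))) / (2 * (d - 1)) ≤ lam / d := by
  have hd0 : 0 < d := by linarith
  have hvertex : lam ≤ 2 * (d - 1) * (lam / d) := by
    rw [mul_div_assoc', le_div_iff₀ hd0]
    nlinarith
  have hvalue : (d - 1) * (lam / d) ^ 2 - lam * (lam / d) + 1 = (d ^ 2 - lam ^ 2) / d ^ 2 := by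
    field_simp
    ring
  have hx : 0 ≤ (d - 1) * (lam / d) ^ 2 - lam * (lam / d) + 1 := by
    rw [hvalue]
    exact div_nonneg (by nlinarith) (sq_nonneg d)
  simpa using quadratic_larger_root_le (c := 1) (by linarith) hvertex hx

theorem mixing_rate_ratio_bounds (d : ℕ) (hd : 2 ≤ d) (lam : ℝ)
    (hlow : 2 * Real.sqrt (d - 1) ≤ lam) (hhigh : lam ≤ d)
    (ρ ρt : ℝ) (hρ : ρ = lam / d)
    (hρt : ρt = (lam + Real.sqrt (lam ^ 2 - 4 * (d - 1))) / (2 * (d - 1))) :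
    (d : ℝ) / (2 * (d - 1)) ≤ ρt / ρ ∧ ρt / ρ ≤ 1 := by
  have hd' : (2 : ℝ) ≤ d := by exact_mod_cast hd
  have hlam : 0 < lam :=
    lt_of_lt_of_le (mul_pos two_pos (Real.sqrt_pos.mpr (by linarith))) hlow
  have hρ0 : 0 < ρ := hρ ▸ div_pos hlam (by linarith)
  have hρt_le : ρt ≤ ρ := hρ ▸ hρt ▸ nonbacktracking_rate_le_simple_rate hd' hlam.le hhigh
  have hρt_ge : lam / (2 * (d - 1)) ≤ ρt := hρt ▸
    div_le_div_of_nonneg_right (le_add_of_nonneg_right (Real.sqrt_nonneg _)) (by linarith)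
  refine ⟨?_, div_le_one_of_le₀ hρt_le hρ0.le⟩
  rw [le_div_iff₀ hρ0, hρ]
  calc (d : ℝ) / (2 * (d - 1)) * (lam / d) = lam / (2 * (d - 1)) := by field_simp
    _ ≤ ρt := hρt_ge
end

section
/- For a d-regular graph with d ≥ 2 and second adjacency eigenvalue λ satisfying 2√(d−1) ≤ λ ≤ d, the non-backtracking mixing rate ρ̃ = (λ + √(λ² − 4(d−1)))/(2(d−1)) is at most the simple random walk mixing rate ρ = λ/d. -/
/-!
With `q = d - 1`, the claim is equivalent to `√(λ² - 4q) ≤ λ (q - 1) / (q + 1)`. Both sides are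
nonnegative, and the square of the right side exceeds `λ² - 4q` by `4q ((q + 1)² - λ²) / (q + 1)²`,
so the inequality is exactly `λ ≤ q + 1 = d`.
-/

lemma sqrt_sq_sub_four_mul_le {q lam : ℝ} (hq : 1 ≤ q) (hlam : 0 ≤ lam) (h : lam ≤ q + 1) :
    Real.sqrt (lam ^ 2 - 4 * q) ≤ lam * (q - 1) / (q + 1) := by
  have hq' : 0 ≤ q - 1 := by linarith
  rw [Real.sqrt_le_iff]
  refine ⟨by positivity, ?_⟩
  have hsq : lam ^ 2 ≤ (q + 1) ^ 2 := pow_le_pow_left₀ hlam h 2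
  rw [div_pow, le_div_iff₀ (by positivity)]
  nlinarith [mul_le_mul_of_nonneg_left hsq (by linarith : (0 : ℝ) ≤ 4 * q)]

lemma add_sqrt_sq_sub_four_mul_div_le {q lam : ℝ} (hq : 1 ≤ q) (hlam : 0 ≤ lam)
    (h : lam ≤ q + 1) :
    (lam + Real.sqrt (lam ^ 2 - 4 * q)) / (2 * q) ≤ lam / (q + 1) := by
  rw [div_le_div_iff₀ (by positivity) (by positivity)]
  calc (lam + Real.sqrt (lam ^ 2 - 4 * q)) * (q + 1)
      ≤ (lam + lam * (q - 1) / (q + 1)) * (q + 1) := by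
        gcongr
        exact sqrt_sq_sub_four_mul_le hq hlam h
    _ = lam * (2 * q) := by
        field_simp
        ring

theorem nbt_mixing_rate_le (d : ℕ) (hd : 2 ≤ d) (lam : ℝ)
    (hlow : 2 * Real.sqrt (d - 1) ≤ lam) (hhigh : lam ≤ d) :
    (lam + Real.sqrt (lam ^ 2 - 4 * (d - 1))) / (2 * (d - 1)) ≤ lam / d := by
  have hq : (1 : ℝ) ≤ d - 1 := by
    have : (2 : ℝ) ≤ d := by exact_mod_cast hd
    linarith
  have hlam : 0 ≤ lam := (by positivity : (0 : ℝ) ≤ 2 * Real.sqrt (d - 1)).trans hlow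
  have key := add_sqrt_sq_sub_four_mul_div_le hq hlam (by rwa [sub_add_cancel])
  rwa [sub_add_cancel] at key
end

section
/- If G is a connected graph with minimum degree ≥ 2 that is not a cycle, then the non-backtracking walk's directed-edge Markov chain with transition matrix P̃ is irreducible. -/
/-!
From a directed edge `e`, the non-backtracking walk reaches a closed communicating class `C`.
Every vertex is the head of an edge of `C` (edges of `C` have predecessors in `C`, and `G` is
connected), so by closedness at least `deg x - 1` edges of `C` leave each vertex `x`. If `C`
contained no edge together with its reversal, at most one edge of `C` would enter each vertex,
since a second one would step to the reversal of the first; then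
`|V| < ∑ₓ (deg x - 1) ≤ |C| ≤ |V|`, as some degree exceeds `2`. So some `c` and `c.rev` lie in
`C`, and `e → c → c.rev → e.rev`, reversing the walk from `e` to `c`. Once every edge reaches its
reversal, the walk can turn around anywhere and so follow any walk of the connected graph.
-/

open Finset

instance {V : Type*} [DecidableEq V] (G : SimpleGraph V) :
    DecidableEq (DirEdge G) := Subtype.instDecidableEq

/-- The non-backtracking random-walk transition matrix on directed edges. -/
noncomputable def nbtTransition {V : Type*} [Fintype V] [DecidableEq V] (G : SimpleGraph V)
    [DecidableRel G.Adj] : Matrix (DirEdge G) (DirEdge G) ℝ := fun e f =>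
  if e.1.2 = f.1.1 ∧ f.1.2 ≠ e.1.1 then 1 / ((G.degree e.1.2 : ℝ) - 1) else 0

namespace Relation

variable {α : Type*} {r : α → α → Prop}

/-- Seneta's essential states: for a finite Markov chain, exactly the recurrent ones. -/
def IsEssential (r : α → α → Prop) (b : α) : Prop :=
  ∀ c, ReflTransGen r b c → ReflTransGen r c b

/-- Any `b` reachable from `a` with the fewest reachable states will do. -/
theorem exists_reflTransGen_isEssential [Fintype α] (r : α → α → Prop) (a : α) :
    ∃ b, ReflTransGen r a b ∧ IsEssential r b := by
  classical
  let reach (x : α) : Finset α := univ.filter (ReflTransGen r x)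
  have mem_reach {x y : α} : y ∈ reach x ↔ ReflTransGen r x y := by simp [reach]
  obtain ⟨b, hab, hmin⟩ :=
    exists_min_image (reach a) (fun x => #(reach x)) ⟨a, mem_reach.2 .refl⟩
  refine ⟨b, mem_reach.1 hab, fun c hbc => ?_⟩
  have hsub : reach c ⊆ reach b := fun y hy => mem_reach.2 (hbc.trans (mem_reach.1 hy))
  have heq := eq_of_subset_of_card_le hsub (hmin c (mem_reach.2 ((mem_reach.1 hab).trans hbc)))
  exact mem_reach.1 (heq ▸ mem_reach.2 .refl)

theorem IsEssential.exists_pred {g c d : α} (hg : IsEssential r g) (hc : ReflTransGen r g c)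
    (hcd : r c d) (hne : d ≠ c) : ∃ b, ReflTransGen r g b ∧ r b c := by
  have hdc : TransGen r d c :=
    (reflTransGen_iff_eq_or_transGen.1 ((hg d (hc.tail hcd)).trans hc)).resolve_left hne.symm
  obtain ⟨b, hdb, hbc⟩ := TransGen.tail'_iff.1 hdc
  exact ⟨b, (hc.tail hcd).trans hdb, hbc⟩

end Relation

open Relation

theorem Matrix.exists_pow_apply_pos_of_transGen {n R : Type*} [Fintype n] [DecidableEq n]
    [Semiring R] [PartialOrder R] [IsStrictOrderedRing R] {A : Matrix n n R} {r : n → n → Prop}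
    (hA : ∀ i j, 0 ≤ A i j) (hr : ∀ i j, r i j → 0 < A i j) {i j : n} (h : TransGen r i j) :
    ∃ t, 1 ≤ t ∧ 0 < (A ^ t) i j := by
  induction h with
  | single hij => exact ⟨1, le_rfl, by rw [pow_one]; exact hr _ _ hij⟩
  | @tail k l _ hkl ih =>
    obtain ⟨t, -, hpos⟩ := ih
    refine ⟨t + 1, by omega, ?_⟩
    rw [pow_succ, Matrix.mul_apply]
    exact sum_pos' (fun m _ => mul_nonneg (Matrix.pow_apply_nonneg hA t i m) (hA m l))
      ⟨k, mem_univ _, mul_pos hpos (hr _ _ hkl)⟩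

namespace DirEdge

variable {V : Type*} {G : SimpleGraph V}

def rev (e : DirEdge G) : DirEdge G := ⟨(e.1.2, e.1.1), e.2.symm⟩

theorem rev_ne (e : DirEdge G) : e.rev ≠ e := fun h => e.2.ne (congrArg (·.1.2) h)

end DirEdge

section NonBacktracking

variable {V : Type*} {G : SimpleGraph V}

def nbtStep (G : SimpleGraph V) (e f : DirEdge G) : Prop :=
  e.1.2 = f.1.1 ∧ f.1.2 ≠ e.1.1

theorem nbtStep_irrefl (e : DirEdge G) : ¬ nbtStep G e e := fun h => h.2 h.1

theorem nbtStep.rev {e f : DirEdge G} (h : nbtStep G e f) : nbtStep G f.rev e.rev :=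
  ⟨h.1.symm, h.2.symm⟩

theorem reflTransGen_nbtStep_rev {e f : DirEdge G} (h : ReflTransGen (nbtStep G) e f) :
    ReflTransGen (nbtStep G) f.rev e.rev := by
  induction h with
  | refl => exact .refl
  | tail _ hstep ih => exact ih.head hstep.rev

theorem transGen_nbtStep (hconn : G.Connected)
    (hrev : ∀ e : DirEdge G, TransGen (nbtStep G) e e.rev) (e f : DirEdge G) :
    TransGen (nbtStep G) e f := by
  have hturn (e : DirEdge G) {c : V} (h : G.Adj e.1.2 c) :
      TransGen (nbtStep G) e ⟨(e.1.2, c), h⟩ := by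
    by_cases hc : c = e.1.1
    · subst hc
      exact hrev e
    · exact .single ⟨rfl, hc⟩
  obtain ⟨⟨x, y⟩, hxy⟩ := f
  have hreach := (SimpleGraph.reachable_iff_reflTransGen _ _).1 (hconn.preconnected e.1.2 x)
  induction hreach generalizing y with
  | refl => exact hturn e hxy
  | @tail w x _ hwx ih => exact (ih _ hwx).trans (hturn ⟨(w, x), hwx⟩ hxy)

variable [Fintype V] [DecidableEq V] [DecidableRel G.Adj]

theorem exists_nbtStep (hdeg : ∀ v, 2 ≤ G.degree v) (e : DirEdge G) : ∃ f, nbtStep G e f := by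
  have htail : e.1.1 ∈ G.neighborFinset e.1.2 := (G.mem_neighborFinset _ _).2 e.2.symm
  have hcard : 0 < #((G.neighborFinset e.1.2).erase e.1.1) := by
    rw [card_erase_of_mem htail, G.card_neighborFinset_eq_degree]
    have := hdeg e.1.2
    omega
  obtain ⟨c, hc⟩ := card_pos.1 hcard
  obtain ⟨hce, hc⟩ := mem_erase.1 hc
  exact ⟨⟨(e.1.2, c), (G.mem_neighborFinset _ _).1 hc⟩, rfl, hce⟩

theorem exists_rev_mem_of_nbtClosed (hdeg : ∀ v, 2 ≤ G.degree v)
    (hnotcycle : ¬ ∀ v, G.degree v = 2) {C : Finset (DirEdge G)}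
    (hclosed : ∀ e ∈ C, ∀ f, nbtStep G e f → f ∈ C) (hhead : ∀ x, ∃ e ∈ C, e.1.2 = x) :
    ∃ e ∈ C, e.rev ∈ C := by
  by_contra! hC
  have hin (x : V) : #(C.filter (·.1.2 = x)) ≤ 1 := by
    refine card_le_one.2 fun e he f hf => ?_
    rw [mem_filter] at he hf
    by_contra hef
    have hstep : nbtStep G f e.rev :=
      ⟨hf.2.trans he.2.symm, fun h => hef (Subtype.ext (Prod.ext h (he.2.trans hf.2.symm)))⟩
    exact hC e he.1 (hclosed f hf.1 _ hstep)
  have hout (x : V) : G.degree x - 1 ≤ #(C.filter (·.1.1 = x)) := by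
    obtain ⟨e, he, rfl⟩ := hhead x
    rw [← G.card_neighborFinset_eq_degree,
      ← card_erase_of_mem ((G.mem_neighborFinset _ _).2 e.2.symm)]
    refine card_le_card_of_surjOn (fun f : DirEdge G => f.1.2) fun y hy => ?_
    obtain ⟨hye, hy⟩ := mem_erase.1 hy
    exact ⟨⟨(e.1.2, y), (G.mem_neighborFinset _ _).1 hy⟩,
      mem_filter.2 ⟨hclosed e he _ ⟨rfl, hye⟩, rfl⟩, rfl⟩
  obtain ⟨v, hv⟩ := not_forall.1 hnotcycle
  have hlt : ∑ _x : V, 1 < ∑ x, (G.degree x - 1) :=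
    sum_lt_sum (fun x _ => by have := hdeg x; omega)
      ⟨v, mem_univ _, by have := hdeg v; omega⟩
  have hC_tail : #C = ∑ x, #(C.filter (·.1.1 = x)) :=
    card_eq_sum_card_fiberwise fun _ _ => mem_univ _
  have hC_head : #C = ∑ x, #(C.filter (·.1.2 = x)) :=
    card_eq_sum_card_fiberwise fun _ _ => mem_univ _
  have := sum_le_sum fun x (_ : x ∈ univ) => hout x
  have := sum_le_sum fun x (_ : x ∈ univ) => hin x
  omega

theorem exists_reflTransGen_snd_eq (hconn : G.Connected) (hdeg : ∀ v, 2 ≤ G.degree v)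
    {g : DirEdge G} (hg : IsEssential (nbtStep G) g) (x : V) :
    ∃ c, ReflTransGen (nbtStep G) g c ∧ c.1.2 = x := by
  have hreach := (SimpleGraph.reachable_iff_reflTransGen _ _).1 (hconn.preconnected g.1.2 x)
  induction hreach with
  | refl => exact ⟨g, .refl, rfl⟩
  | @tail y z _ hyz ih =>
    obtain ⟨c, hc, rfl⟩ := ih
    by_cases hz : z = c.1.1
    · obtain ⟨d, hcd⟩ := exists_nbtStep hdeg c
      obtain ⟨b, hb, hbc⟩ :=
        hg.exists_pred hc hcd fun h => nbtStep_irrefl c (h ▸ hcd)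
      exact ⟨b, hb, hbc.1.trans hz.symm⟩
    · exact ⟨⟨(c.1.2, z), hyz⟩, hc.tail ⟨rfl, hz⟩, rfl⟩

theorem transGen_nbtStep_rev (hconn : G.Connected) (hdeg : ∀ v, 2 ≤ G.degree v)
    (hnotcycle : ¬ ∀ v, G.degree v = 2) (e : DirEdge G) :
    TransGen (nbtStep G) e e.rev := by
  classical
  obtain ⟨g, heg, hg⟩ := exists_reflTransGen_isEssential (nbtStep G) e
  obtain ⟨c, hc, hcrev⟩ := exists_rev_mem_of_nbtClosed hdeg hnotcycle
    (C := univ.filter (ReflTransGen (nbtStep G) g))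
    (fun b hb f hbf => by simp only [mem_filter, mem_univ, true_and] at hb ⊢; exact hb.tail hbf)
    (fun x => by simpa using exists_reflTransGen_snd_eq hconn hdeg hg x)
  simp only [mem_filter, mem_univ, true_and] at hc hcrev
  have hec := heg.trans hc
  have hc_rev : TransGen (nbtStep G) c c.rev :=
    (reflTransGen_iff_eq_or_transGen.1 ((hg c hc).trans hcrev)).resolve_left c.rev_ne
  exact (TransGen.trans_right hec hc_rev).trans_left (reflTransGen_nbtStep_rev hec)

theorem nbtTransition_pos_of_nbtStep {e f : DirEdge G} (h : nbtStep G e f) :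
    0 < nbtTransition G e f := by
  have hdeg : 1 < G.degree e.1.2 := by
    rw [← G.card_neighborFinset_eq_degree]
    exact one_lt_card.2 ⟨e.1.1, (G.mem_neighborFinset _ _).2 e.2.symm,
      f.1.2, (G.mem_neighborFinset _ _).2 (h.1 ▸ f.2), h.2.symm⟩
  have hdeg_real : (1 : ℝ) < G.degree e.1.2 := by exact_mod_cast hdeg
  rw [show nbtTransition G e f = 1 / ((G.degree e.1.2 : ℝ) - 1) from if_pos h]
  exact one_div_pos.2 (by linarith)

theorem nbtTransition_nonneg (e f : DirEdge G) : 0 ≤ nbtTransition G e f := by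
  by_cases h : nbtStep G e f
  · exact (nbtTransition_pos_of_nbtStep h).le
  · exact (if_neg h).ge

end NonBacktracking

/-- If `G` is connected with minimum degree `≥ 2` and is not a cycle (i.e. not
every vertex has degree exactly `2`), then the non-backtracking directed-edge
Markov chain is irreducible. -/
theorem nbt_irreducible {V : Type*} [Fintype V] [DecidableEq V]
    (G : SimpleGraph V) [DecidableRel G.Adj]
    (hconn : G.Connected) (hdeg : ∀ v : V, 2 ≤ G.degree v)
    (hnotcycle : ¬ ∀ v : V, G.degree v = 2) :
    ∀ e f : DirEdge G, ∃ t : ℕ, 1 ≤ t ∧ 0 < (nbtTransition G ^ t) e f := by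
  intro e f
  have hreach : TransGen (nbtStep G) e f :=
    transGen_nbtStep hconn (transGen_nbtStep_rev hconn hdeg hnotcycle) e f
  exact Matrix.exists_pow_apply_pos_of_transGen nbtTransition_nonneg
    (fun _ _ => nbtTransition_pos_of_nbtStep) hreach
end
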